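/- Let a, b, c be positive real numbers and n ≥ 0 an integer. Then ∫_0^1 K_n(x|c,b) · f(x|a,b) dx = (−1)^n · (b)^(n) · (c − a)^(n) / ( n! · (a + b)^(n) ). -/

import Mathlib

/-- The rising factorial (Pochhammer symbol) `(y)^(k) = y(y+1)⋯(y+k-1)`. -/
noncomputable def risingFactorial (x : ℝ) (n : ℕ) : ℝ :=
  ∏ i ∈ Finset.range n, (x + i)

/-- The shifted Jacobi polynomial
`K_n(x|a,b) = (1/n!) ∑_{m=0}^n C(n,m) (a+b+n-1)^(m) (b+m)^(n-m) (x-1)^m`. -/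
noncomputable def jacobiK (n : ℕ) (a b x : ℝ) : ℝ :=
  (1 / (n.factorial : ℝ)) * ∑ m ∈ Finset.range (n + 1),
    (n.choose m : ℝ) * risingFactorial (a + b + n - 1) m *
      risingFactorial (b + m) (n - m) * (x - 1) ^ m

/-- The Beta(a,b) probability density: `x^(a-1)(1-x)^(b-1)/B(a,b)` on `[0,1]`, `0` otherwise,
where `B(a,b) = Γ(a)Γ(b)/Γ(a+b)`. -/
noncomputable def betaDensity (a b x : ℝ) : ℝ :=
  if 0 ≤ x ∧ x ≤ 1 then
    x ^ (a - 1) * (1 - x) ^ (b - 1) / (Real.Gamma a * Real.Gamma b / Real.Gamma (a + b))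
  else 0

open Finset intervalIntegral MeasureTheory

lemma rf_zero (x : ℝ) : risingFactorial x 0 = 1 := by simp [risingFactorial]
lemma rf_succ (x : ℝ) (n : ℕ) : risingFactorial x (n+1) = risingFactorial x n * (x + n) := by
  simp [risingFactorial, Finset.prod_range_succ]
lemma rf_succ_left (x : ℝ) (n : ℕ) : risingFactorial x (n+1) = x * risingFactorial (x+1) n := by
  rw [risingFactorial, Finset.prod_range_succ']
  rw [show (x + ((0:ℕ):ℝ)) = x by simp, mul_comm]
  congr 1
  apply Finset.prod_congr rfl
  intro i _; push_cast; ring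
lemma rf_add (x : ℝ) (m k : ℕ) :
    risingFactorial x (m + k) = risingFactorial x m * risingFactorial (x + m) k := by
  rw [risingFactorial, Finset.prod_range_add]
  congr 1
  apply Finset.prod_congr rfl
  intro i _; push_cast; ring
lemma rf_pos {x : ℝ} (hx : 0 < x) (n : ℕ) : 0 < risingFactorial x n := by
  apply Finset.prod_pos; intro i _; positivity

lemma Gamma_add_nat {x : ℝ} (hx : 0 < x) (n : ℕ) :
    Real.Gamma (x + n) = Real.Gamma x * risingFactorial x n := by
  induction n with
  | zero => simp [rf_zero]
  | succ n ih =>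
    have hxn : (0:ℝ) < x + n := by positivity
    have h : x + (n+1:ℕ) = (x + n) + 1 := by push_cast; ring
    rw [h, Real.Gamma_add_one hxn.ne', ih, rf_succ]
    ring

lemma rf_reflect (y : ℝ) (n : ℕ) :
    risingFactorial (1 - n - y) n = (-1)^n * risingFactorial y n := by
  rw [risingFactorial, risingFactorial, ← Finset.prod_range_reflect]
  rw [show ((-1:ℝ))^n = ∏ _i ∈ Finset.range n, (-1:ℝ) by simp, ← Finset.prod_mul_distrib]
  apply Finset.prod_congr rfl
  intro i hi
  rw [Finset.mem_range] at hi
  have h1 : ((n - 1 - i : ℕ) : ℝ) = (n:ℝ) - 1 - i := by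
    have : (1:ℕ) ≤ n := by omega
    have : i ≤ n - 1 := by omega
    push_cast [Nat.cast_sub ‹i ≤ n - 1›, Nat.cast_sub ‹1 ≤ n›]
    ring
  rw [h1]; ring

lemma vandermonde_rf (A : ℝ) (n : ℕ) : ∀ C : ℝ,
    ∑ m ∈ Finset.range (n+1), (n.choose m : ℝ) * ((-1)^m * risingFactorial A m *
      risingFactorial (C + m) (n - m)) = risingFactorial (C - A) n := by
  induction n with
  | zero => intro C; simp [rf_zero]
  | succ n ih =>
    intro C
    set T : ℕ → ℝ := fun m => (-1)^m * risingFactorial A m * risingFactorial (C + m) (n + 1 - m)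
      with hT
    have step1 : ∑ m ∈ Finset.range (n+2), ((n+1).choose m : ℝ) * T m
        = T 0 + ∑ k ∈ Finset.range (n+1), ((n+1).choose (k+1) : ℝ) * T (k+1) := by
      rw [Finset.sum_range_succ']
      simp [add_comm]
    have step2 : ∀ k, ((n+1).choose (k+1) : ℝ) * T (k+1)
        = (n.choose k : ℝ) * T (k+1) + (n.choose (k+1) : ℝ) * T (k+1) := by
      intro k; rw [Nat.choose_succ_succ]; push_cast; ring
    have step3 : T 0 + ∑ k ∈ Finset.range (n+1), ((n.choose (k+1) : ℝ)) * T (k+1)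
        = ∑ m ∈ Finset.range (n+1), (n.choose m : ℝ) * T m := by
      rw [show T 0 = (n.choose 0 : ℝ) * T 0 by simp, add_comm,
        ← Finset.sum_range_succ' (fun m => (n.choose m : ℝ) * T m) (n+1),
        Finset.sum_range_succ (fun m => (n.choose m : ℝ) * T m) (n+1)]
      simp
    have key : ∀ m ∈ Finset.range (n+1),
        T m + T (m+1)
        = (C - A) * ((-1)^m * risingFactorial A m * risingFactorial ((C+1) + m) (n - m)) := by
      intro m hm
      rw [Finset.mem_range] at hm
      simp only [hT]
      have h1 : n + 1 - m = (n - m) + 1 := by omega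
      have h2 : n + 1 - (m+1) = n - m := by omega
      rw [h1, h2, rf_succ_left (C + m), rf_succ A m]
      rw [show C + ((m:ℕ):ℝ) + 1 = (C + 1) + m by ring]
      rw [show C + ((m+1:ℕ):ℝ) = (C+1) + m by push_cast; ring]
      ring
    calc ∑ m ∈ Finset.range (n+1+1), ((n+1).choose m : ℝ) * T m
        = T 0 + ∑ k ∈ Finset.range (n+1), (((n.choose k : ℝ)) * T (k+1)
            + (n.choose (k+1) : ℝ) * T (k+1)) := by
          rw [step1]; congr 1; exact Finset.sum_congr rfl fun k _ => step2 k
      _ = (T 0 + ∑ k ∈ Finset.range (n+1), (n.choose (k+1) : ℝ) * T (k+1))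
            + ∑ k ∈ Finset.range (n+1), (n.choose k : ℝ) * T (k+1) := by
          rw [Finset.sum_add_distrib]; ring
      _ = ∑ m ∈ Finset.range (n+1), (n.choose m : ℝ) * (T m + T (m+1)) := by
          rw [step3, ← Finset.sum_add_distrib]
          exact Finset.sum_congr rfl fun k _ => by ring
      _ = (C - A) * ∑ m ∈ Finset.range (n+1), (n.choose m : ℝ) *
            ((-1)^m * risingFactorial A m * risingFactorial ((C+1) + m) (n - m)) := by
          rw [Finset.mul_sum]
          refine Finset.sum_congr rfl fun m hm => ?_
          rw [key m hm]; ring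
      _ = (C - A) * risingFactorial ((C+1) - A) n := by rw [ih (C+1)]
      _ = risingFactorial (C - A) (n+1) := by
          rw [rf_succ_left]; ring_nf

lemma betaIntegrable_left {p q : ℝ} (hp : 0 < p) :
    IntervalIntegrable (fun x => x ^ (p-1) * (1-x) ^ (q-1)) volume 0 (1/2) := by
  apply IntervalIntegrable.mul_continuousOn
  · exact intervalIntegral.intervalIntegrable_rpow' (by linarith)
  · apply ContinuousOn.rpow_const
    · exact (continuous_const.sub continuous_id).continuousOn
    · intro x hx
      rw [Set.uIcc_of_le (by norm_num : (0:ℝ) ≤ 1/2)] at hx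
      left
      have := hx.2
      intro h; linarith [h]

lemma betaIntegrable {p q : ℝ} (hp : 0 < p) (hq : 0 < q) :
    IntervalIntegrable (fun x => x ^ (p-1) * (1-x) ^ (q-1)) volume 0 1 := by
  apply IntervalIntegrable.trans (betaIntegrable_left hp (q := q))
  have h := (betaIntegrable_left hq (q := p)).comp_sub_left 1
  simp only [sub_sub_cancel] at h
  norm_num at h
  have h2 : (fun x : ℝ => x ^ (p-1) * (1-x) ^ (q-1)) = (fun x : ℝ => (1-x) ^ (q-1) * x ^ (p-1)) :=
    funext fun x => mul_comm _ _
  rw [h2]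
  exact h.symm

lemma real_beta {p q : ℝ} (hp : 0 < p) (hq : 0 < q) :
    ∫ x in (0:ℝ)..1, x ^ (p-1) * (1-x) ^ (q-1)
      = Real.Gamma p * Real.Gamma q / Real.Gamma (p+q) := by
  have hne : Real.Gamma (p+q) ≠ 0 := (Real.Gamma_pos_of_pos (by linarith)).ne'
  have hC := Complex.Gamma_mul_Gamma_eq_betaIntegral
    (by simpa using hp : 0 < Complex.re (p:ℂ)) (by simpa using hq : 0 < Complex.re (q:ℂ))
  have hbeta : Complex.betaIntegral (p:ℂ) (q:ℂ)
      = ((∫ x in (0:ℝ)..1, x ^ (p-1) * (1-x) ^ (q-1) : ℝ) : ℂ) := by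
    rw [Complex.betaIntegral, ← intervalIntegral.integral_ofReal]
    apply intervalIntegral.integral_congr
    intro x hx
    rw [Set.uIcc_of_le (by norm_num : (0:ℝ) ≤ 1)] at hx
    push_cast
    rw [Complex.ofReal_cpow hx.1, Complex.ofReal_cpow (by linarith [hx.2])]
    push_cast
    ring
  have heq : ((Real.Gamma p * Real.Gamma q : ℝ) : ℂ)
      = ((Real.Gamma (p+q) * ∫ x in (0:ℝ)..1, x ^ (p-1) * (1-x) ^ (q-1) : ℝ) : ℂ) := by
    push_cast
    rw [← Complex.Gamma_ofReal, ← Complex.Gamma_ofReal, ← Complex.Gamma_ofReal, hC, hbeta]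
    push_cast
    ring
  have h2 := Complex.ofReal_injective heq
  field_simp
  linarith [h2]

theorem stmt_6 (a b c : ℝ) (ha : 0 < a) (hb : 0 < b) (hc : 0 < c) (n : ℕ) :
    ∫ x in (0:ℝ)..1, jacobiK n c b x * betaDensity a b x
      = (-1) ^ n * risingFactorial b n * risingFactorial (c - a) n /
          ((n.factorial : ℝ) * risingFactorial (a + b) n) := by
  have hGa := Real.Gamma_pos_of_pos ha
  have hGb := Real.Gamma_pos_of_pos hb
  have hGab := Real.Gamma_pos_of_pos (show (0:ℝ) < a + b by linarith)
  set B : ℝ := Real.Gamma a * Real.Gamma b / Real.Gamma (a + b) with hBdef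
  have hB : 0 < B := by positivity
  have hn : (0:ℝ) < n.factorial := by positivity
  set A : ℝ := c + b + n - 1 with hAdef
  set t : ℕ → ℝ := fun m => (n.choose m : ℝ) * risingFactorial A m
    * risingFactorial (b + m) (n - m) with ht
  -- step 1: rewrite the integrand on [0,1]
  have step1 : ∫ x in (0:ℝ)..1, jacobiK n c b x * betaDensity a b x
      = ∫ x in (0:ℝ)..1, ∑ m ∈ Finset.range (n+1),
          (t m * (-1)^m / (n.factorial * B)) * (x ^ (a-1) * (1-x) ^ (b + (m:ℝ) - 1)) := by
    apply intervalIntegral.integral_congr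
    intro x hx
    rw [Set.uIcc_of_le (by norm_num : (0:ℝ) ≤ 1)] at hx
    have hx0 := hx.1
    have hx1 := hx.2
    unfold betaDensity jacobiK
    simp only [if_pos (show 0 ≤ x ∧ x ≤ 1 from ⟨hx0, hx1⟩)]
    rw [← hBdef]
    have hsum : (1 / (n.factorial:ℝ)) * (∑ m ∈ Finset.range (n + 1),
        (n.choose m : ℝ) * risingFactorial (c + b + n - 1) m *
        risingFactorial (b + m) (n - m) * (x - 1) ^ m) *
        (x ^ (a-1) * (1-x) ^ (b-1) / B)
      = ∑ m ∈ Finset.range (n + 1), ((n.choose m : ℝ) * risingFactorial (c + b + n - 1) m *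
        risingFactorial (b + m) (n - m)) * ((x - 1) ^ m * (1-x)^(b-1)) *
        (x ^ (a-1) / (n.factorial * B)) := by
      rw [Finset.mul_sum, Finset.sum_mul]
      exact Finset.sum_congr rfl fun m _ => by ring
    rw [hsum]
    refine Finset.sum_congr rfl fun m _ => ?_
    have hpow : (x - 1) ^ m * (1-x)^(b-1) = (-1)^m * (1-x) ^ (b + (m:ℝ) - 1) := by
      rw [show x - 1 = -(1-x) by ring, neg_pow]
      rcases eq_or_lt_of_le hx1 with h1 | h1
      · subst h1
        rcases Nat.eq_zero_or_pos m with hm | hm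
        · subst hm; norm_num
        · have hbm : (0:ℝ) < b + (m:ℝ) - 1 := by
            have : (1:ℝ) ≤ (m:ℝ) := by exact_mod_cast hm
            linarith
          rw [show (1:ℝ)-1 = 0 by ring, zero_pow hm.ne', Real.zero_rpow hbm.ne']
          ring
      · have hpos : (0:ℝ) < 1 - x := by linarith
        rw [mul_assoc, ← Real.rpow_natCast (1-x) m, ← Real.rpow_add hpos,
          show (m:ℝ) + (b-1) = b + (m:ℝ) - 1 by ring]
    rw [mul_assoc ((n.choose m : ℝ) * risingFactorial (c + b + n - 1) m *
      risingFactorial (b + m) (n - m)), hpow, ht, hAdef]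
    ring
  rw [step1]
  -- step 2: swap sum and integral
  have step2 : ∫ x in (0:ℝ)..1, ∑ m ∈ Finset.range (n+1),
      (t m * (-1)^m / (n.factorial * B)) * (x ^ (a-1) * (1-x) ^ (b + (m:ℝ) - 1))
    = ∑ m ∈ Finset.range (n+1), (t m * (-1)^m / (n.factorial * B)) *
        ∫ x in (0:ℝ)..1, x ^ (a-1) * (1-x) ^ ((b + (m:ℝ)) - 1) := by
    rw [intervalIntegral.integral_finset_sum]
    · exact Finset.sum_congr rfl fun m _ => intervalIntegral.integral_const_mul _ _
    · intro m _
      exact (betaIntegrable ha (show (0:ℝ) < b + m by positivity)).const_mul _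
  rw [step2]
  -- step 3: evaluate each integral and simplify coefficients
  have step3 : ∀ m ∈ Finset.range (n+1),
      (t m * (-1)^m / (n.factorial * B)) *
        ∫ x in (0:ℝ)..1, x ^ (a-1) * (1-x) ^ ((b + (m:ℝ)) - 1)
      = (risingFactorial b n / (n.factorial * risingFactorial (a+b) n)) *
          ((n.choose m : ℝ) * ((-1)^m * risingFactorial A m *
            risingFactorial ((a+b) + m) (n - m))) := by
    intro m hm
    rw [Finset.mem_range] at hm
    rw [real_beta ha (show (0:ℝ) < b + m by positivity)]
    rw [show a + (b + (m:ℝ)) = (a+b) + (m:ℝ) by ring]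
    rw [Gamma_add_nat hb m, Gamma_add_nat (show (0:ℝ) < a + b by linarith) m]
    have e1 : risingFactorial b n = risingFactorial b m * risingFactorial (b + m) (n - m) := by
      rw [← rf_add, Nat.add_sub_cancel' (by omega : m ≤ n)]
    have e2 : risingFactorial (a+b) n
        = risingFactorial (a+b) m * risingFactorial ((a+b) + m) (n - m) := by
      rw [← rf_add, Nat.add_sub_cancel' (by omega : m ≤ n)]
    rw [ht]
    simp only
    rw [e1, e2, hBdef]
    have h1 : risingFactorial (a+b) m ≠ 0 := (rf_pos (by linarith) m).ne'
    have h2 : risingFactorial ((a+b)+m) (n-m) ≠ 0 := (rf_pos (by positivity) (n-m)).ne'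
    field_simp
  rw [Finset.sum_congr rfl step3, ← Finset.mul_sum, vandermonde_rf A n (a+b)]
  rw [show (a+b) - A = 1 - (n:ℝ) - (c - a) by rw [hAdef]; ring]
  rw [rf_reflect]
  ring
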